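/- Let n, k, c, L be positive integers with k dividing n. Let Ψ be a finite set of complex numbers with |Ψ| = 2^c, H a complex random variable with P(H = 0) = 0, and define for a = 1, …, n/k the pass counts L_a = L·(n/k − a + 1). With quadrature angles 0 = θ_0 < θ_1 < ⋯ < θ_N = π/2, b_t = (θ_t − θ_{t−1})/π, G(σ, θ) = Σ_{β_i, β_j ∈ Ψ} E[exp(−|H·(β_i − β_j)|² / (4σ² sin²θ))], and F(L_a, σ) = Σ_{t=1}^N b_t · (2^{−2c} · G(σ, θ_t))^{L_a}, the finite-blocklength BLER upper bound P_e^{UB}(σ) = 1 − ∏_{a=1}^{n/k} (1 − min{1, (2^k − 1)·2^{n − ak} · F(L_a, σ)}) satisfies lim_{σ → 0⁺} P_e^{UB}(σ) = P_EF, where P_EF = 1 − ∏_{a=1}^{n/k} (1 − min{1, (2^k − 1)·2^{n − ak − L_a·c − 1}}). -/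

import Mathlib

/-!
As `σ → 0⁺`, dominated convergence sends each pairwise expectation in `G(σ, θ_t)` to `1` when
`βᵢ = βⱼ` and to `0` otherwise, because `H ≠ 0` almost surely; hence `G(σ, θ_t) → |Ψ| = 2^c`
at every node with `sin θ_t ≠ 0`. The weights `b_t` telescope to `1/2`, so
`F(L', σ) → 2^{-L'c-1}`, and the bound depends continuously on the values `F(L_a, σ)`.
-/

open MeasureTheory Real Filter

open Topology

lemma tendsto_exp_neg_div_nhdsGT_zero {a : ℝ} (ha : 0 < a) :
    Tendsto (fun x : ℝ => exp (-a / x)) (𝓝[>] 0) (𝓝 0) := by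
  simp only [div_eq_mul_inv]
  exact tendsto_exp_atBot.comp (tendsto_inv_nhdsGT_zero.const_mul_atTop_of_neg (neg_lt_zero.2 ha))

lemma tendsto_four_mul_sq_mul_sq_nhdsGT_zero {s : ℝ} (hs : s ≠ 0) :
    Tendsto (fun σ : ℝ => 4 * σ ^ 2 * s ^ 2) (𝓝[>] 0) (𝓝[>] 0) := by
  refine tendsto_nhdsWithin_of_tendsto_nhds_of_eventually_within _ ?_ ?_
  · have : Continuous fun σ : ℝ => 4 * σ ^ 2 * s ^ 2 := by fun_prop
    simpa using this.continuousWithinAt.tendsto (s := Set.Ioi 0) (x := 0)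
  · filter_upwards [self_mem_nhdsWithin] with σ (hσ : 0 < σ)
    exact Set.mem_Ioi.2 (by positivity)

section GaussianKernel

variable {Ω : Type*} [MeasurableSpace Ω] {μ : Measure Ω}

lemma tendsto_integral_exp_neg_norm_sq_div {E : Type*} [NormedAddCommGroup E] [IsFiniteMeasure μ]
    {X : Ω → E} (hX : AEStronglyMeasurable X μ) (hX0 : ∀ᵐ ω ∂μ, X ω ≠ 0) {s : ℝ} (hs : s ≠ 0) :
    Tendsto (fun σ => ∫ ω, exp (-‖X ω‖ ^ 2 / (4 * σ ^ 2 * s ^ 2)) ∂μ) (𝓝[>] 0) (𝓝 0) := by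
  have h := tendsto_integral_filter_of_dominated_convergence (μ := μ) (l := 𝓝[>] (0 : ℝ))
    (F := fun σ ω => exp (-‖X ω‖ ^ 2 / (4 * σ ^ 2 * s ^ 2))) (f := fun _ => 0) (fun _ => 1)
    (Eventually.of_forall fun σ => ?meas) (Eventually.of_forall fun σ => ?bound)
    (integrable_const 1) ?lim
  · simpa using h
  case meas => fun_prop
  case bound =>
    refine Eventually.of_forall fun ω => ?_
    rw [norm_of_nonneg (exp_pos _).le, exp_le_one_iff]
    exact div_nonpos_of_nonpos_of_nonneg (neg_nonpos.2 (sq_nonneg _)) (by positivity)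
  case lim =>
    filter_upwards [hX0] with ω hω
    exact (tendsto_exp_neg_div_nhdsGT_zero (by positivity)).comp
      (tendsto_four_mul_sq_mul_sq_nhdsGT_zero hs)

lemma tendsto_sum_integral_exp_neg_norm_mul_sub_sq_div [IsProbabilityMeasure μ] {H : Ω → ℂ}
    (hH : AEStronglyMeasurable H μ) (hH0 : ∀ᵐ ω ∂μ, H ω ≠ 0) (Ψ : Finset ℂ) {s : ℝ}
    (hs : s ≠ 0) :
    Tendsto (fun σ => ∑ βi ∈ Ψ, ∑ βj ∈ Ψ,
      ∫ ω, exp (-‖H ω * (βi - βj)‖ ^ 2 / (4 * σ ^ 2 * s ^ 2)) ∂μ) (𝓝[>] 0) (𝓝 Ψ.card) := by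
  have hpair : ∀ βi βj : ℂ, Tendsto
      (fun σ => ∫ ω, exp (-‖H ω * (βi - βj)‖ ^ 2 / (4 * σ ^ 2 * s ^ 2)) ∂μ) (𝓝[>] 0)
      (𝓝 (if βi = βj then 1 else 0)) := by
    intro βi βj
    split_ifs with hij
    · simp [hij]
    · refine tendsto_integral_exp_neg_norm_sq_div (hH.mul_const _) ?_ hs
      filter_upwards [hH0] with ω hω
      exact mul_ne_zero hω (sub_ne_zero.2 hij)
  have hlim := tendsto_finsetSum Ψ fun βi _ => tendsto_finsetSum Ψ fun βj _ => hpair βi βj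
  simpa only [Finset.sum_ite_eq, Finset.sum_boole, Finset.filter_mem_eq_inter, Finset.inter_self]
    using hlim

end GaussianKernel

lemma Finset.sum_Icc_one_sub_pred {G : Type*} [AddCommGroup G] (f : ℕ → G) (N : ℕ) :
    ∑ t ∈ Finset.Icc 1 N, (f t - f (t - 1)) = f N - f 0 := by
  induction N with
  | zero => simp
  | succ N ih =>
    rw [Finset.sum_Icc_succ_top (by omega), ih, Nat.add_sub_cancel]
    abel

lemma sum_Icc_one_sub_pred_div_pi {θ : ℕ → ℝ} {N : ℕ} (hθ0 : θ 0 = 0) (hθN : θ N = π / 2) :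
    ∑ t ∈ Finset.Icc 1 N, (θ t - θ (t - 1)) / π = 1 / 2 := by
  rw [← Finset.sum_div, Finset.sum_Icc_one_sub_pred, hθN, hθ0]
  field_simp [pi_ne_zero]
  ring

lemma sin_pos_of_lt_succ {θ : ℕ → ℝ} {N t : ℕ} (hθ0 : 0 ≤ θ 0) (hθN : θ N < π)
    (hθ : ∀ m, m < N → θ m < θ (m + 1)) (ht : t ∈ Finset.Icc 1 N) : 0 < sin (θ t) := by
  obtain ⟨ht1, htN⟩ := Finset.mem_Icc.1 ht
  have hmono : StrictMonoOn θ (Set.Iic N) := strictMonoOn_Iic_of_lt_succ fun m hm => by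
    simpa only [Order.succ_eq_add_one] using hθ m hm
  have hpos : θ 0 < θ t := hmono (Set.mem_Iic.2 (Nat.zero_le N)) (Set.mem_Iic.2 htN) ht1
  have hle : θ t ≤ θ N := hmono.monotoneOn (Set.mem_Iic.2 htN) (Set.mem_Iic.2 le_rfl) htN
  exact sin_pos_of_pos_of_lt_pi (hθ0.trans_lt hpos) (hle.trans_lt hθN)

theorem spinal_BLER_bound_tendsto_error_floor_general
    {Ω : Type*} [MeasurableSpace Ω] (μ : Measure Ω) [IsProbabilityMeasure μ]
    (H : Ω → ℂ) (hH : Measurable H) (hH0 : μ {ω | H ω = 0} = 0)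
    (n k c : ℕ)
    (Ψ : Finset ℂ) (hΨ : Ψ.card = 2 ^ c)
    (N : ℕ)
    (θ : ℕ → ℝ) (hθ0 : θ 0 = 0) (hθN : θ N = Real.pi / 2)
    (hθmono : ∀ t, t < N → θ t < θ (t + 1))
    (G : ℝ → ℝ → ℝ)
    (hG : ∀ σ ϑ, G σ ϑ = ∑ βi ∈ Ψ, ∑ βj ∈ Ψ,
      ∫ ω, Real.exp (-‖H ω * (βi - βj)‖^2 /
        (4 * σ^2 * (Real.sin ϑ)^2)) ∂μ)
    (F : ℕ → ℝ → ℝ)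
    (hF : ∀ L' σ, F L' σ = ∑ t ∈ Finset.Icc 1 N,
      ((θ t - θ (t - 1)) / Real.pi) * ((2 : ℝ) ^ (-(2 * (c : ℤ))) * G σ (θ t)) ^ L')
    (La : ℕ → ℕ)
    (Pub : ℝ → ℝ)
    (hPub : ∀ σ, Pub σ = 1 - ∏ a ∈ Finset.Icc 1 (n / k),
      (1 - min 1 (((2 : ℝ) ^ k - 1) * (2 : ℝ) ^ (n - a * k) * F (La a) σ)))
    (PEF : ℝ)
    (hPEF : PEF = 1 - ∏ a ∈ Finset.Icc 1 (n / k),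
      (1 - min 1 (((2 : ℝ) ^ k - 1) *
        (2 : ℝ) ^ ((n : ℤ) - (a : ℤ) * (k : ℤ) - (La a : ℤ) * (c : ℤ) - 1)))) :
    Filter.Tendsto Pub (nhdsWithin 0 (Set.Ioi 0)) (nhds PEF) := by
  have hG_lim : ∀ t ∈ Finset.Icc 1 N, Tendsto (fun σ => G σ (θ t)) (𝓝[>] 0) (𝓝 (2 ^ c)) :=
    fun t ht => by
      have hsin := sin_pos_of_lt_succ hθ0.ge (by linarith [pi_pos]) hθmono ht
      simpa only [hG, hΨ, Nat.cast_pow, Nat.cast_ofNat] using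
        tendsto_sum_integral_exp_neg_norm_mul_sub_sq_div hH.aestronglyMeasurable
          (measure_eq_zero_iff_ae_notMem.1 hH0) Ψ hsin.ne'
  have hF_lim : ∀ L', Tendsto (F L') (𝓝[>] 0) (𝓝 (2 ^ (-((L' : ℤ) * c) - 1))) := fun L' => by
    have hvalue : (2 : ℝ) ^ (-((L' : ℤ) * c) - 1) = ∑ t ∈ Finset.Icc 1 N,
        ((θ t - θ (t - 1)) / π) * ((2 : ℝ) ^ (-(2 * (c : ℤ))) * 2 ^ c) ^ L' := by
      have hbase : (2 : ℝ) ^ (-(2 * (c : ℤ))) * 2 ^ c = 2 ^ (-(c : ℤ)) := by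
        rw [← zpow_natCast, ← zpow_add₀ two_ne_zero]
        ring_nf
      rw [← Finset.sum_mul, sum_Icc_one_sub_pred_div_pi hθ0 hθN, hbase, ← zpow_natCast,
        ← zpow_mul, zpow_sub₀ two_ne_zero, zpow_one]
      ring_nf
    rw [funext (hF L'), hvalue]
    exact tendsto_finsetSum _ fun t ht => (((hG_lim t ht).const_mul _).pow L').const_mul _
  rw [funext hPub, hPEF]
  refine tendsto_const_nhds.sub (tendsto_finsetProd _ fun a ha =>
    tendsto_const_nhds.sub (tendsto_const_nhds.min ?_))
  have hak : a * k ≤ n :=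
    (Nat.mul_le_mul_right k (Finset.mem_Icc.1 ha).2).trans (Nat.div_mul_le_self n k)
  have hexp : (2 : ℝ) ^ ((n : ℤ) - a * k - La a * c - 1)
      = 2 ^ (n - a * k) * 2 ^ (-((La a : ℤ) * c) - 1) := by
    rw [← zpow_natCast, ← zpow_add₀ two_ne_zero]
    push_cast [hak]
    ring_nf
  rw [hexp, ← mul_assoc]
  exact (hF_lim _).const_mul _

/-- For `(n, k, c, Ψ, L)` Spinal codes (with `k ∣ n`,
`|Ψ| = 2^c`, `H` almost surely nonzero, pass counts
`L_a = L·(n/k − a + 1)`, quadrature angles `0 = θ₀ < ⋯ < θ_N = π/2`,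
weights `b_t = (θ_t − θ_{t−1})/π`,
`G(σ, θ) = Σ_{βᵢ, βⱼ ∈ Ψ} E[exp(−|H·(βᵢ − βⱼ)|²/(4σ² sin²θ))]` and
`F(L', σ) = Σ_{t=1}^N b_t (2^{−2c} G(σ, θ_t))^{L'}`), the finite-blocklength
BLER upper bound
`P_e^{UB}(σ) = 1 − ∏_{a=1}^{n/k} (1 − min{1, (2^k − 1)·2^{n−ak}·F(L_a, σ)})`
satisfies `lim_{σ → 0⁺} P_e^{UB}(σ) = P_EF`, where
`P_EF = 1 − ∏_{a=1}^{n/k} (1 − min{1, (2^k − 1)·2^{n−ak−L_a·c−1}})`. -/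
theorem spinal_BLER_bound_tendsto_error_floor
    {Ω : Type*} [MeasurableSpace Ω] (μ : Measure Ω) [IsProbabilityMeasure μ]
    (H : Ω → ℂ) (hH : Measurable H) (hH0 : μ {ω | H ω = 0} = 0)
    (n k c L : ℕ) (hn : 0 < n) (hk : 0 < k) (hc : 0 < c) (hL : 0 < L)
    (hkn : k ∣ n)
    (Ψ : Finset ℂ) (hΨ : Ψ.card = 2 ^ c)
    (N : ℕ) (hN : 0 < N)
    (θ : ℕ → ℝ) (hθ0 : θ 0 = 0) (hθN : θ N = Real.pi / 2)
    (hθmono : ∀ t, t < N → θ t < θ (t + 1))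
    (G : ℝ → ℝ → ℝ)
    (hG : ∀ σ ϑ, G σ ϑ = ∑ βi ∈ Ψ, ∑ βj ∈ Ψ,
      ∫ ω, Real.exp (-‖H ω * (βi - βj)‖^2 /
        (4 * σ^2 * (Real.sin ϑ)^2)) ∂μ)
    (F : ℕ → ℝ → ℝ)
    (hF : ∀ L' σ, F L' σ = ∑ t ∈ Finset.Icc 1 N,
      ((θ t - θ (t - 1)) / Real.pi) * ((2 : ℝ) ^ (-(2 * (c : ℤ))) * G σ (θ t)) ^ L')
    (La : ℕ → ℕ) (hLa : ∀ a, La a = L * (n / k - a + 1))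
    (Pub : ℝ → ℝ)
    (hPub : ∀ σ, Pub σ = 1 - ∏ a ∈ Finset.Icc 1 (n / k),
      (1 - min 1 (((2 : ℝ) ^ k - 1) * (2 : ℝ) ^ (n - a * k) * F (La a) σ)))
    (PEF : ℝ)
    (hPEF : PEF = 1 - ∏ a ∈ Finset.Icc 1 (n / k),
      (1 - min 1 (((2 : ℝ) ^ k - 1) *
        (2 : ℝ) ^ ((n : ℤ) - (a : ℤ) * (k : ℤ) - (La a : ℤ) * (c : ℤ) - 1)))) :
    Filter.Tendsto Pub (nhdsWithin 0 (Set.Ioi 0)) (nhds PEF) :=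
  spinal_BLER_bound_tendsto_error_floor_general μ H hH hH0 n k c Ψ hΨ N θ hθ0 hθN hθmono G hG F hF
    La Pub hPub PEF hPEF
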